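/- Let a, b, c, d, e, y, z, w, u, x, p, q be nonzero complex numbers with all denominators nonzero, and set a_0 = a(1-bc/a)(1-cd/a)(1-ce/a)(1-bcde/a) / [c(1-bcd/a)(1-bce/a)(1-cde/a)(1-a/c)] and a_1 = x(1-yz/x)(1-zw/x)(1-zu/x)(1-yzwu/x) / [z(1-y)(1-w)(1-u)(1-yz^2wu/x^2)]. Then for every integer n ≥ 0: a_0 Σ_{k=0}^{n-1} [(1-bcde p^{2k}/a)/(1-bcde/a)] p^k · (b,d,e,bc^2de/a^2;p)_k / (ap/c, bcep/a, bcdp/a, cdep/a;p)_k · (yq,wq,uq,yz^2wuq/x^2;q)_k / (xq/z, zwuq/x, yzuq/x, yzwq/x;q)_k = (b,d,e,bc^2de/a^2;p)_n / (a/c, bce/a, bcd/a, cde/a;p)_n · (yq,wq,uq,yz^2wuq/x^2;q)_n / (xq/z, zwuq/x, yzuq/x, yzwq/x;q)_n - 1 - a_1 Σ_{k=1}^{n} [(1-yzwu q^{2k}/x)/(1-yzwu/x)] q^k · (y,w,u,yz^2wu/x^2;q)_k / (xq/z, zwuq/x, yzuq/x, yzwq/x;q)_k · (b,d,e,bc^2de/a^2;p)_k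 / (a/c, bce/a, bcd/a, cde/a;p)_k. -/

import Mathlib

/-!
Put `A_k = (b,d,e,bc²de/a²;p)_k / (a/c,bce/a,bcd/a,cde/a;p)_k` and
`B_k = (yq,wq,uq,yz²wuq/x²;q)_k / (xq/z,zwuq/x,yzuq/x,yzwq/x;q)_k`. The identity is summation by
parts applied to `A_n B_n - 1 = ∑_{k<n} (A_{k+1} B_{k+1} - A_k B_k)`. Each difference
`A_{k+1} - A_k` is a single term, because the four new numerator factors and the four new
denominator factors differ by `(a/c)(1-bc/a)(1-cd/a)(1-ce/a) t (1 - bcde t²/a)` with `t = p^k`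
(`wellPoised_factor_sub`). The same quartic identity, read with `(a,b,c,d,e) := (x,y,z,w,u)` and
`t = q^(k+1)`, does the same for `B`.
-/

open Finset

/-- The q-shifted factorial `(a;q)_k`. -/
noncomputable def qPoch (a q : ℂ) (k : ℕ) : ℂ := ∏ j ∈ Finset.range k, (1 - a * q ^ j)

noncomputable def qPoch4 (a₁ a₂ a₃ a₄ q : ℂ) (k : ℕ) : ℂ :=
  qPoch a₁ q k * qPoch a₂ q k * qPoch a₃ q k * qPoch a₄ q k

theorem sum_range_sub_mul_eq {R : Type*} [CommRing R] (A B : ℕ → R) (n : ℕ) :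
    ∑ k ∈ range n, (A (k + 1) - A k) * B k =
      A n * B n - A 0 * B 0 - ∑ k ∈ range n, A (k + 1) * (B (k + 1) - B k) := by
  rw [eq_sub_iff_add_eq, ← sum_add_distrib, ← sum_range_sub (fun k ↦ A k * B k)]
  exact sum_congr rfl fun k _ ↦ by ring

theorem sum_Icc_one_eq_sum_range {M : Type*} [AddCommMonoid M] (f : ℕ → M) (n : ℕ) :
    ∑ k ∈ Icc 1 n, f k = ∑ k ∈ range n, f (k + 1) := by
  rw [← Ico_add_one_right_eq_Icc, sum_Ico_eq_sum_range, Nat.add_sub_cancel]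
  simp only [add_comm]

section qPoch

variable (a a₁ a₂ a₃ a₄ q : ℂ) (k : ℕ)

theorem qPoch_succ : qPoch a q (k + 1) = qPoch a q k * (1 - a * q ^ k) :=
  prod_range_succ _ _

theorem qPoch_succ_eq_one_sub_mul : qPoch a q (k + 1) = (1 - a) * qPoch (a * q) q k := by
  rw [qPoch, prod_range_succ', pow_zero, mul_one, mul_comm]
  congr 1
  exact prod_congr rfl fun j _ ↦ by ring

theorem qPoch4_zero : qPoch4 a₁ a₂ a₃ a₄ q 0 = 1 := by
  simp [qPoch4, qPoch]

theorem qPoch4_succ : qPoch4 a₁ a₂ a₃ a₄ q (k + 1) = qPoch4 a₁ a₂ a₃ a₄ q k *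
    ((1 - a₁ * q ^ k) * (1 - a₂ * q ^ k) * (1 - a₃ * q ^ k) * (1 - a₄ * q ^ k)) := by
  simp only [qPoch4, qPoch_succ]; ring

theorem qPoch4_succ_eq_mul : qPoch4 a₁ a₂ a₃ a₄ q (k + 1) =
    (1 - a₁) * (1 - a₂) * (1 - a₃) * (1 - a₄) * qPoch4 (a₁ * q) (a₂ * q) (a₃ * q) (a₄ * q) q k := by
  simp only [qPoch4, qPoch_succ_eq_one_sub_mul]; ring

theorem qPoch4_div_succ_sub {b₁ b₂ b₃ b₄ : ℂ} (h : qPoch4 b₁ b₂ b₃ b₄ q (k + 1) ≠ 0) :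
    qPoch4 a₁ a₂ a₃ a₄ q (k + 1) / qPoch4 b₁ b₂ b₃ b₄ q (k + 1) -
        qPoch4 a₁ a₂ a₃ a₄ q k / qPoch4 b₁ b₂ b₃ b₄ q k =
      qPoch4 a₁ a₂ a₃ a₄ q k / qPoch4 b₁ b₂ b₃ b₄ q (k + 1) *
        ((1 - a₁ * q ^ k) * (1 - a₂ * q ^ k) * (1 - a₃ * q ^ k) * (1 - a₄ * q ^ k) -
          (1 - b₁ * q ^ k) * (1 - b₂ * q ^ k) * (1 - b₃ * q ^ k) * (1 - b₄ * q ^ k)) := by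
  rw [qPoch4_succ b₁ b₂ b₃ b₄] at h ⊢
  rw [qPoch4_succ]
  generalize qPoch4 b₁ b₂ b₃ b₄ q k = B at *
  generalize (1 - b₁ * q ^ k) * (1 - b₂ * q ^ k) * (1 - b₃ * q ^ k) * (1 - b₄ * q ^ k) = t at *
  obtain ⟨hB, ht⟩ := mul_ne_zero_iff.mp h
  field_simp

end qPoch

theorem wellPoised_factor_sub {a c : ℂ} (ha : a ≠ 0) (hc : c ≠ 0) (b d e t : ℂ) :
    (1 - b * t) * (1 - d * t) * (1 - e * t) * (1 - b * c ^ 2 * d * e / a ^ 2 * t) -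
        (1 - a / c * t) * (1 - b * c * e / a * t) * (1 - b * c * d / a * t) *
          (1 - c * d * e / a * t) =
      a / c * ((1 - b * c / a) * (1 - c * d / a) * (1 - c * e / a)) * t *
        (1 - b * c * d * e * t ^ 2 / a) := by
  field_simp
  ring

theorem wellPoised_ratio_succ_sub {a c : ℂ} (ha : a ≠ 0) (hc : c ≠ 0) (b d e p : ℂ) (k : ℕ)
    (hbcde : 1 - b * c * d * e / a ≠ 0)
    (hden : qPoch4 (a / c) (b * c * e / a) (b * c * d / a) (c * d * e / a) p (k + 1) ≠ 0) :
    qPoch4 b d e (b * c ^ 2 * d * e / a ^ 2) p (k + 1) /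
          qPoch4 (a / c) (b * c * e / a) (b * c * d / a) (c * d * e / a) p (k + 1) -
        qPoch4 b d e (b * c ^ 2 * d * e / a ^ 2) p k /
          qPoch4 (a / c) (b * c * e / a) (b * c * d / a) (c * d * e / a) p k =
      a * ((1 - b * c / a) * (1 - c * d / a) * (1 - c * e / a) * (1 - b * c * d * e / a)) /
          (c * ((1 - b * c * d / a) * (1 - b * c * e / a) * (1 - c * d * e / a) * (1 - a / c))) *
        ((1 - b * c * d * e * p ^ (2 * k) / a) / (1 - b * c * d * e / a) * p ^ k *
          (qPoch4 b d e (b * c ^ 2 * d * e / a ^ 2) p k /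
            qPoch4 (a * p / c) (b * c * e * p / a) (b * c * d * p / a) (c * d * e * p / a) p
              k)) := by
  rw [qPoch4_div_succ_sub _ _ _ _ _ _ hden, wellPoised_factor_sub ha hc]
  have hshift : qPoch4 (a / c) (b * c * e / a) (b * c * d / a) (c * d * e / a) p (k + 1) =
      (1 - b * c * d / a) * (1 - b * c * e / a) * (1 - c * d * e / a) * (1 - a / c) *
        qPoch4 (a * p / c) (b * c * e * p / a) (b * c * d * p / a) (c * d * e * p / a) p k := by
    rw [qPoch4_succ_eq_mul]
    simp only [div_mul_eq_mul_div]
    ring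
  rw [hshift] at hden ⊢
  obtain ⟨hC, hD⟩ := mul_ne_zero_iff.mp hden
  generalize (1 - b * c * d / a) * (1 - b * c * e / a) * (1 - c * d * e / a) * (1 - a / c) = C at *
  generalize 1 - b * c * d * e / a = L at *
  field_simp
  ring

theorem shiftedWellPoised_ratio_succ_sub {x z : ℂ} (hx : x ≠ 0) (hz : z ≠ 0) (y w u q : ℂ)
    (k : ℕ) (hyzwu : 1 - y * z * w * u / x ≠ 0)
    (hnum : (1 - y) * (1 - w) * (1 - u) * (1 - y * z ^ 2 * w * u / x ^ 2) ≠ 0)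
    (hden : qPoch4 (x * q / z) (z * w * u * q / x) (y * z * u * q / x) (y * z * w * q / x) q
      (k + 1) ≠ 0) :
    qPoch4 (y * q) (w * q) (u * q) (y * z ^ 2 * w * u * q / x ^ 2) q (k + 1) /
          qPoch4 (x * q / z) (z * w * u * q / x) (y * z * u * q / x) (y * z * w * q / x) q
            (k + 1) -
        qPoch4 (y * q) (w * q) (u * q) (y * z ^ 2 * w * u * q / x ^ 2) q k /
          qPoch4 (x * q / z) (z * w * u * q / x) (y * z * u * q / x) (y * z * w * q / x) q k =
      x * ((1 - y * z / x) * (1 - z * w / x) * (1 - z * u / x) * (1 - y * z * w * u / x)) /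
          (z * ((1 - y) * (1 - w) * (1 - u) * (1 - y * z ^ 2 * w * u / x ^ 2))) *
        ((1 - y * z * w * u * q ^ (2 * (k + 1)) / x) / (1 - y * z * w * u / x) * q ^ (k + 1) *
          (qPoch4 y w u (y * z ^ 2 * w * u / x ^ 2) q (k + 1) /
            qPoch4 (x * q / z) (z * w * u * q / x) (y * z * u * q / x) (y * z * w * q / x) q
              (k + 1))) := by
  have hfactor : (1 - y * q * q ^ k) * (1 - w * q * q ^ k) * (1 - u * q * q ^ k) *
        (1 - y * z ^ 2 * w * u * q / x ^ 2 * q ^ k) -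
      (1 - x * q / z * q ^ k) * (1 - z * w * u * q / x * q ^ k) *
          (1 - y * z * u * q / x * q ^ k) * (1 - y * z * w * q / x * q ^ k) =
      x / z * ((1 - y * z / x) * (1 - z * w / x) * (1 - z * u / x)) * q ^ (k + 1) *
        (1 - y * z * w * u * q ^ (2 * (k + 1)) / x) := by
    linear_combination wellPoised_factor_sub hx hz y w u (q ^ (k + 1))
  have hshift : qPoch4 y w u (y * z ^ 2 * w * u / x ^ 2) q (k + 1) =
      (1 - y) * (1 - w) * (1 - u) * (1 - y * z ^ 2 * w * u / x ^ 2) *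
        qPoch4 (y * q) (w * q) (u * q) (y * z ^ 2 * w * u * q / x ^ 2) q k := by
    rw [qPoch4_succ_eq_mul]
    simp only [div_mul_eq_mul_div]
  rw [qPoch4_div_succ_sub _ _ _ _ _ _ hden, hfactor, hshift]
  generalize qPoch4 (x * q / z) (z * w * u * q / x) (y * z * u * q / x) (y * z * w * q / x) q
    (k + 1) = D at *
  generalize (1 - y) * (1 - w) * (1 - u) * (1 - y * z ^ 2 * w * u / x ^ 2) = C at *
  generalize 1 - y * z * w * u / x = L at *
  field_simp

theorem bibasic_transformation_general
    (a b c d e x y z w u p q a0 a1 : ℂ) (n : ℕ)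
    (ha : a ≠ 0) (hc : c ≠ 0)
    (hx : x ≠ 0) (hz : z ≠ 0)
    (hbcde : 1 - b * c * d * e / a ≠ 0)
    (hyzwu : 1 - y * z * w * u / x ≠ 0)
    (ha1den : z * ((1 - y) * (1 - w) * (1 - u) * (1 - y * z ^ 2 * w * u / x ^ 2)) ≠ 0)
    (ha0 : a0 = a * ((1 - b * c / a) * (1 - c * d / a) * (1 - c * e / a) * (1 - b * c * d * e / a)) /
      (c * ((1 - b * c * d / a) * (1 - b * c * e / a) * (1 - c * d * e / a) * (1 - a / c))))
    (ha1 : a1 = x * ((1 - y * z / x) * (1 - z * w / x) * (1 - z * u / x) * (1 - y * z * w * u / x)) /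
      (z * ((1 - y) * (1 - w) * (1 - u) * (1 - y * z ^ 2 * w * u / x ^ 2))))
    (hdenP' : ∀ k ≤ n, qPoch (a / c) p k * qPoch (b * c * e / a) p k *
      qPoch (b * c * d / a) p k * qPoch (c * d * e / a) p k ≠ 0)
    (hdenQ : ∀ k ≤ n, qPoch (x * q / z) q k * qPoch (z * w * u * q / x) q k *
      qPoch (y * z * u * q / x) q k * qPoch (y * z * w * q / x) q k ≠ 0) :
    a0 * ∑ k ∈ Finset.range n,
        (1 - b * c * d * e * p ^ (2 * k) / a) / (1 - b * c * d * e / a) * p ^ k *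
          ((qPoch b p k * qPoch d p k * qPoch e p k * qPoch (b * c ^ 2 * d * e / a ^ 2) p k) /
            (qPoch (a * p / c) p k * qPoch (b * c * e * p / a) p k *
              qPoch (b * c * d * p / a) p k * qPoch (c * d * e * p / a) p k)) *
          ((qPoch (y * q) q k * qPoch (w * q) q k * qPoch (u * q) q k *
              qPoch (y * z ^ 2 * w * u * q / x ^ 2) q k) /
            (qPoch (x * q / z) q k * qPoch (z * w * u * q / x) q k *
              qPoch (y * z * u * q / x) q k * qPoch (y * z * w * q / x) q k)) =
      (qPoch b p n * qPoch d p n * qPoch e p n * qPoch (b * c ^ 2 * d * e / a ^ 2) p n) /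
          (qPoch (a / c) p n * qPoch (b * c * e / a) p n * qPoch (b * c * d / a) p n *
            qPoch (c * d * e / a) p n) *
        ((qPoch (y * q) q n * qPoch (w * q) q n * qPoch (u * q) q n *
            qPoch (y * z ^ 2 * w * u * q / x ^ 2) q n) /
          (qPoch (x * q / z) q n * qPoch (z * w * u * q / x) q n *
            qPoch (y * z * u * q / x) q n * qPoch (y * z * w * q / x) q n)) - 1
      - a1 * ∑ k ∈ Finset.Icc 1 n,
          (1 - y * z * w * u * q ^ (2 * k) / x) / (1 - y * z * w * u / x) * q ^ k *
            ((qPoch y q k * qPoch w q k * qPoch u q k *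
                qPoch (y * z ^ 2 * w * u / x ^ 2) q k) /
              (qPoch (x * q / z) q k * qPoch (z * w * u * q / x) q k *
                qPoch (y * z * u * q / x) q k * qPoch (y * z * w * q / x) q k)) *
            ((qPoch b p k * qPoch d p k * qPoch e p k * qPoch (b * c ^ 2 * d * e / a ^ 2) p k) /
              (qPoch (a / c) p k * qPoch (b * c * e / a) p k * qPoch (b * c * d / a) p k *
                qPoch (c * d * e / a) p k)) := by
  obtain ⟨-, hnum⟩ := mul_ne_zero_iff.mp ha1den
  subst ha0 ha1
  simp only [← qPoch4.eq_1]
  rw [sum_Icc_one_eq_sum_range, mul_sum, mul_sum]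
  convert sum_range_sub_mul_eq
    (fun k ↦ qPoch4 b d e (b * c ^ 2 * d * e / a ^ 2) p k /
      qPoch4 (a / c) (b * c * e / a) (b * c * d / a) (c * d * e / a) p k)
    (fun k ↦ qPoch4 (y * q) (w * q) (u * q) (y * z ^ 2 * w * u * q / x ^ 2) q k /
      qPoch4 (x * q / z) (z * w * u * q / x) (y * z * u * q / x) (y * z * w * q / x) q k) n
    using 2 with k hk
  · rw [wellPoised_ratio_succ_sub ha hc b d e p k hbcde (hdenP' _ (mem_range.mp hk))]
    ring
  · simp only [qPoch4_zero, div_one, mul_one]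
  · refine sum_congr rfl fun k hk ↦ ?_
    rw [shiftedWellPoised_ratio_succ_sub hx hz y w u q k hyzwu hnum (hdenQ _ (mem_range.mp hk))]
    ring

/-- Bibasic transformation with two independent bases `p` and `q` (Corollary of the
first Abel-type transformation). -/
theorem bibasic_transformation
    (a b c d e x y z w u p q a0 a1 : ℂ) (n : ℕ)
    (ha : a ≠ 0) (hb : b ≠ 0) (hc : c ≠ 0) (hd : d ≠ 0) (he : e ≠ 0)
    (hx : x ≠ 0) (hy : y ≠ 0) (hz : z ≠ 0) (hw : w ≠ 0) (hu : u ≠ 0)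
    (hp : p ≠ 0) (hq : q ≠ 0)
    (hbcde : 1 - b * c * d * e / a ≠ 0)
    (hyzwu : 1 - y * z * w * u / x ≠ 0)
    (ha0den : c * ((1 - b * c * d / a) * (1 - b * c * e / a) * (1 - c * d * e / a) * (1 - a / c)) ≠ 0)
    (ha1den : z * ((1 - y) * (1 - w) * (1 - u) * (1 - y * z ^ 2 * w * u / x ^ 2)) ≠ 0)
    (ha0 : a0 = a * ((1 - b * c / a) * (1 - c * d / a) * (1 - c * e / a) * (1 - b * c * d * e / a)) /
      (c * ((1 - b * c * d / a) * (1 - b * c * e / a) * (1 - c * d * e / a) * (1 - a / c))))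
    (ha1 : a1 = x * ((1 - y * z / x) * (1 - z * w / x) * (1 - z * u / x) * (1 - y * z * w * u / x)) /
      (z * ((1 - y) * (1 - w) * (1 - u) * (1 - y * z ^ 2 * w * u / x ^ 2))))
    (hdenP : ∀ k ≤ n, qPoch (a * p / c) p k * qPoch (b * c * e * p / a) p k *
      qPoch (b * c * d * p / a) p k * qPoch (c * d * e * p / a) p k ≠ 0)
    (hdenP' : ∀ k ≤ n, qPoch (a / c) p k * qPoch (b * c * e / a) p k *
      qPoch (b * c * d / a) p k * qPoch (c * d * e / a) p k ≠ 0)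
    (hdenQ : ∀ k ≤ n, qPoch (x * q / z) q k * qPoch (z * w * u * q / x) q k *
      qPoch (y * z * u * q / x) q k * qPoch (y * z * w * q / x) q k ≠ 0) :
    a0 * ∑ k ∈ Finset.range n,
        (1 - b * c * d * e * p ^ (2 * k) / a) / (1 - b * c * d * e / a) * p ^ k *
          ((qPoch b p k * qPoch d p k * qPoch e p k * qPoch (b * c ^ 2 * d * e / a ^ 2) p k) /
            (qPoch (a * p / c) p k * qPoch (b * c * e * p / a) p k *
              qPoch (b * c * d * p / a) p k * qPoch (c * d * e * p / a) p k)) *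
          ((qPoch (y * q) q k * qPoch (w * q) q k * qPoch (u * q) q k *
              qPoch (y * z ^ 2 * w * u * q / x ^ 2) q k) /
            (qPoch (x * q / z) q k * qPoch (z * w * u * q / x) q k *
              qPoch (y * z * u * q / x) q k * qPoch (y * z * w * q / x) q k)) =
      (qPoch b p n * qPoch d p n * qPoch e p n * qPoch (b * c ^ 2 * d * e / a ^ 2) p n) /
          (qPoch (a / c) p n * qPoch (b * c * e / a) p n * qPoch (b * c * d / a) p n *
            qPoch (c * d * e / a) p n) *
        ((qPoch (y * q) q n * qPoch (w * q) q n * qPoch (u * q) q n *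
            qPoch (y * z ^ 2 * w * u * q / x ^ 2) q n) /
          (qPoch (x * q / z) q n * qPoch (z * w * u * q / x) q n *
            qPoch (y * z * u * q / x) q n * qPoch (y * z * w * q / x) q n)) - 1
      - a1 * ∑ k ∈ Finset.Icc 1 n,
          (1 - y * z * w * u * q ^ (2 * k) / x) / (1 - y * z * w * u / x) * q ^ k *
            ((qPoch y q k * qPoch w q k * qPoch u q k *
                qPoch (y * z ^ 2 * w * u / x ^ 2) q k) /
              (qPoch (x * q / z) q k * qPoch (z * w * u * q / x) q k *
                qPoch (y * z * u * q / x) q k * qPoch (y * z * w * q / x) q k)) *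
            ((qPoch b p k * qPoch d p k * qPoch e p k * qPoch (b * c ^ 2 * d * e / a ^ 2) p k) /
              (qPoch (a / c) p k * qPoch (b * c * e / a) p k * qPoch (b * c * d / a) p k *
                qPoch (c * d * e / a) p k)) :=
  bibasic_transformation_general a b c d e x y z w u p q a0 a1 n ha hc hx hz hbcde hyzwu ha1den ha0
    ha1 hdenP' hdenQ
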